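/- Let G = K₄ be the complete graph on four vertices V, let T = V, fix t̂ ∈ V, and let x : E(K₄) → ℝ be the vector with x_e = 1/2 for every edge e. Then for every τ > 1/2, the family 𝓛 of T-odd τ-narrow subsets of V∖{t̂} (with respect to x) contains the three singletons {v} for v ∈ V∖{t̂} and the set V∖{t̂}, and there do NOT exist vectors f^U : E → ℝ for U ∈ 𝓛 satisfying simultaneously: f^U ≥ 0 for all U ∈ 𝓛, ∑_{U∈𝓛} f^U ≤ x componentwise, and f^U(δ(U)) ≥ 1 for all U ∈ 𝓛. -/

import Mathlib

/-!
Packing nonnegative vectors `f^U` under `x` bounds the sum of their cut values `f^U(δ(U))` by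
`x(E) = 6 · 1/2 = 3`. But `𝓛` has at least four members, the three singletons and `V ∖ {t̂}`,
whose cuts have `x`-value `3/2 < 1 + τ`, and each of them asks for cut value at least `1`.
-/

open Finset
open scoped Classical

variable {V : Type*}

/-- `x(δ(U))`: the total `x`-value of the edges of `G` with exactly one endpoint in `U`. -/
noncomputable def xCut [Fintype V] [DecidableEq V] (G : SimpleGraph V)
    (x : Sym2 V → ℝ) (U : Finset V) : ℝ :=
  ∑ u ∈ U, ∑ w ∈ Uᶜ, if G.Adj u w then x s(u, w) else 0

/-- The family of `T`-odd `τ`-narrow subsets of `V ∖ {t̂}` for the complete graph `K₄`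
with `T = V` and the all-(1/2) edge vector. -/
noncomputable def narrowFam (τ : ℝ) (that : Fin 4) : Finset (Finset (Fin 4)) :=
  (univ : Finset (Finset (Fin 4))).filter
    (fun S => S ⊆ univ.erase that ∧ Odd ((S ∩ (univ : Finset (Fin 4))).card) ∧
      xCut (⊤ : SimpleGraph (Fin 4)) (fun _ => (1 : ℝ) / 2) S < 1 + τ)

/-- Each edge of `δ(U)` is counted once, as the pair `(u, w)` with `u ∈ U`, `w ∉ U`. -/
lemma xCut_le_sum_edgeFinset [Fintype V] [DecidableEq V] (G : SimpleGraph V) [Fintype G.edgeSet]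
    {f : Sym2 V → ℝ} (hf : ∀ e, 0 ≤ f e) (U : Finset V) :
    xCut G f U ≤ ∑ e ∈ G.edgeFinset, f e := by
  set P := (U ×ˢ Uᶜ).filter fun p : V × V => G.Adj p.1 p.2
  have hP : xCut G f U = ∑ p ∈ P, f s(p.1, p.2) := by
    rw [xCut, ← sum_product', sum_filter]
  have hinj : Set.InjOn (fun p : V × V => s(p.1, p.2)) P := by
    intro p hp q hq hpq
    simp only [P, coe_filter, Set.mem_ofPred_eq, mem_product, mem_compl] at hp hq
    rcases Sym2.eq_iff.1 hpq with ⟨h₁, h₂⟩ | ⟨h₁, -⟩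
    · exact Prod.ext h₁ h₂
    · exact absurd (h₁ ▸ hp.1.1) hq.1.2
  rw [hP, ← sum_image hinj]
  refine sum_le_sum_of_subset_of_nonneg ?_ fun e _ _ => hf e
  intro e he
  obtain ⟨p, hp, rfl⟩ := mem_image.1 he
  exact SimpleGraph.mem_edgeFinset.2 (mem_filter.1 hp).2

lemma sum_xCut_le_sum_edgeFinset [Fintype V] [DecidableEq V] (G : SimpleGraph V)
    [Fintype G.edgeSet] (𝓛 : Finset (Finset V)) {f : Finset V → Sym2 V → ℝ} {x : Sym2 V → ℝ}
    (hf : ∀ U ∈ 𝓛, ∀ e, 0 ≤ f U e) (hfx : ∀ e ∈ G.edgeSet, ∑ U ∈ 𝓛, f U e ≤ x e) :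
    ∑ U ∈ 𝓛, xCut G (f U) U ≤ ∑ e ∈ G.edgeFinset, x e :=
  calc ∑ U ∈ 𝓛, xCut G (f U) U ≤ ∑ U ∈ 𝓛, ∑ e ∈ G.edgeFinset, f U e :=
        sum_le_sum fun U hU => xCut_le_sum_edgeFinset G (hf U hU) U
    _ = ∑ e ∈ G.edgeFinset, ∑ U ∈ 𝓛, f U e := sum_comm
    _ ≤ ∑ e ∈ G.edgeFinset, x e := sum_le_sum fun e he => hfx e (SimpleGraph.mem_edgeFinset.1 he)

lemma xCut_top_const [Fintype V] [DecidableEq V] (c : ℝ) (U : Finset V) :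
    xCut ⊤ (fun _ => c) U = #U * #Uᶜ * c := by
  have hadj : ∀ u ∈ U, ∀ w ∈ Uᶜ, (⊤ : SimpleGraph V).Adj u w := fun u hu w hw =>
    (SimpleGraph.top_adj u w).2 (ne_of_mem_of_not_mem hu (mem_compl.1 hw))
  calc xCut ⊤ (fun _ => c) U = ∑ _u ∈ U, ∑ _w ∈ Uᶜ, c :=
        sum_congr rfl fun u hu => sum_congr rfl fun w hw => by simp [hadj u hu w hw]
    _ = #U * #Uᶜ * c := by simp only [sum_const, nsmul_eq_mul]; ring

lemma mem_narrowFam {τ : ℝ} {that : Fin 4} {U : Finset (Fin 4)} :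
    U ∈ narrowFam τ that ↔ U ⊆ univ.erase that ∧ Odd #U ∧ (#U * #Uᶜ / 2 : ℝ) < 1 + τ := by
  rw [narrowFam, mem_filter, inter_univ, xCut_top_const]
  simp only [mem_univ, true_and]
  ring_nf

lemma singleton_mem_narrowFam {τ : ℝ} (hτ : 1 / 2 < τ) {that v : Fin 4} (hv : v ≠ that) :
    {v} ∈ narrowFam τ that := by
  refine mem_narrowFam.2 ⟨singleton_subset_iff.2 (mem_erase.2 ⟨hv, mem_univ v⟩), by simp, ?_⟩
  rw [card_compl, card_singleton, Fintype.card_fin]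
  norm_num
  linarith

lemma erase_mem_narrowFam {τ : ℝ} (hτ : 1 / 2 < τ) (that : Fin 4) :
    univ.erase that ∈ narrowFam τ that := by
  refine mem_narrowFam.2 ⟨Subset.rfl, ?_, ?_⟩ <;>
    simp only [card_compl, card_erase_of_mem (mem_univ that), card_univ, Fintype.card_fin]
  · decide
  · norm_num
    linarith

lemma four_le_card_narrowFam {τ : ℝ} (hτ : 1 / 2 < τ) (that : Fin 4) :
    4 ≤ #(narrowFam τ that) := by
  set S := univ.erase that
  have hS : #S = 3 := by simp [S, card_erase_of_mem]
  have hS_notMem : S ∉ S.image singleton := by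
    simp only [mem_image, not_exists, not_and]
    intro v _ hv
    simpa [hS] using congrArg card hv
  have hsub : insert S (S.image singleton) ⊆ narrowFam τ that := by
    intro U hU
    rcases mem_insert.1 hU with rfl | hU
    · exact erase_mem_narrowFam hτ that
    · obtain ⟨v, hv, rfl⟩ := mem_image.1 hU
      exact singleton_mem_narrowFam hτ (ne_of_mem_erase hv)
  calc 4 = #(insert S (S.image singleton)) := by
        rw [card_insert_of_notMem hS_notMem, card_image_of_injective _ singleton_injective, hS]
    _ ≤ #(narrowFam τ that) := card_le_card hsub

theorem stmt14 (that : Fin 4) (τ : ℝ) (hτ : 1 / 2 < τ) :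
    (∀ v : Fin 4, v ≠ that → ({v} : Finset (Fin 4)) ∈ narrowFam τ that) ∧
    ((univ : Finset (Fin 4)).erase that ∈ narrowFam τ that) ∧
    ¬ ∃ f : Finset (Fin 4) → Sym2 (Fin 4) → ℝ,
        (∀ U ∈ narrowFam τ that, ∀ e, 0 ≤ f U e) ∧
        (∀ e ∈ (⊤ : SimpleGraph (Fin 4)).edgeSet,
          ∑ U ∈ narrowFam τ that, f U e ≤ (1 : ℝ) / 2) ∧
        (∀ U ∈ narrowFam τ that, 1 ≤ xCut (⊤ : SimpleGraph (Fin 4)) (f U) U) := by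
  refine ⟨fun v hv => singleton_mem_narrowFam hτ hv, erase_mem_narrowFam hτ that, ?_⟩
  rintro ⟨f, hf_nonneg, hf_packed, hf_cut⟩
  have h_upper := sum_xCut_le_sum_edgeFinset ⊤ (narrowFam τ that) hf_nonneg hf_packed
  rw [sum_const, SimpleGraph.card_edgeFinset_top_eq_card_choose_two, Fintype.card_fin] at h_upper
  have h_lower : #(narrowFam τ that) • (1 : ℝ) ≤ ∑ U ∈ narrowFam τ that, xCut ⊤ (f U) U :=
    card_nsmul_le_sum _ _ 1 hf_cut
  have h_card : (4 : ℝ) ≤ #(narrowFam τ that) := by exact_mod_cast four_le_card_narrowFam hτ that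
  norm_num [Nat.choose] at h_upper h_lower
  linarith
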